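/- (First Geometric Lemma, Lemma 3.1) There exist a finite set Λ_Ξ contained in S² ∩ ℚ³ (unit vectors in ℝ³ with rational coordinates), for each ξ ∈ Λ_Ξ vectors ξ₁, ξ₂ ∈ ℝ³ such that (ξ, ξ₁, ξ₂) is an orthonormal basis of ℝ³, a constant ε_Ξ > 0, and for each ξ ∈ Λ_Ξ a function γ_ξ that is smooth and strictly positive on the set of 3×3 skew-symmetric real matrices A with |A| < ε_Ξ, such that every 3×3 skew-symmetric real matrix A with |A| < ε_Ξ satisfies A = Σ_{ξ ∈ Λ_Ξ} (γ_ξ(A))² (ξ ⊗ ξ₂ − ξ₂ ⊗ ξ). -/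

import Mathlib

open scoped Matrix

/- Frobenius norm and normed-space structure on 3×3 real matrices. -/
attribute [local instance] Matrix.frobeniusNormedAddCommGroup Matrix.frobeniusNormedSpace

/-- Outer product of two vectors in ℝ³: `(u ⊗ w)ᵢⱼ = uᵢ wⱼ`. -/
def outer (u w : Fin 3 → ℝ) : Matrix (Fin 3) (Fin 3) ℝ := fun i j => u i * w j

/-- A vector in ℝ³ has rational coordinates. -/
def IsRationalVec (u : Fin 3 → ℝ) : Prop := ∀ i, ∃ q : ℚ, u i = (q : ℝ)

/-- Euclidean dot product on ℝ³. -/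
def dot3 (u v : Fin 3 → ℝ) : ℝ := ∑ i, u i * v i

/-- `(u, v, w)` is an orthonormal basis of ℝ³ (three pairwise-orthogonal unit vectors). -/
def OrthonormalTriple (u v w : Fin 3 → ℝ) : Prop :=
  dot3 u u = 1 ∧ dot3 v v = 1 ∧ dot3 w w = 1 ∧
  dot3 u v = 0 ∧ dot3 u w = 0 ∧ dot3 v w = 0

/-!
Take the six signed coordinate axes `ξ = ±eₖ`, with `ξ₁ = e_{k+2}` and `ξ₂ = e_{k+1}`.
A skew-symmetric `A` equals `∑ₖ aₖ Wₖ`, where `aₖ = A_{k,k+1}` and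
`Wₖ = eₖ ⊗ e_{k+1} − e_{k+1} ⊗ eₖ`. The pair `±eₖ` contributes `±Wₖ`, so the splitting
`aₖ = (1 + aₖ/2) − (1 − aₖ/2)` gives the decomposition with `γ_ξ(A)² = 1 + ½ ξ · Aξ₂`,
a positive affine function of `A` as long as `|aₖ| ≤ ‖A‖ < 1`.
-/

theorem Matrix.norm_entry_le_frobenius_norm {m n α : Type*} [Fintype m] [Fintype n]
    [NormedAddCommGroup α] (A : Matrix m n α) (i : m) (j : n) : ‖A i j‖ ≤ ‖A‖ :=
  calc ‖A i j‖ ≤ ‖WithLp.toLp 2 (A i)‖ := PiLp.norm_apply_le (WithLp.toLp 2 (A i)) j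
    _ ≤ ‖A‖ := PiLp.norm_apply_le (WithLp.toLp 2 fun i => WithLp.toLp 2 (A i)) i

/-- On a signed axis `±eₖ` this is `e_{k+m}`, so it chooses the companions `ξ₁`, `ξ₂` as functions
of `ξ` alone. -/
def absShift {ι : Type*} [AddGroup ι] (m : ι) (ξ : ι → ℝ) : ι → ℝ := fun i => |ξ (i - m)|

theorem absShift_single {ι : Type*} [AddGroup ι] [DecidableEq ι] (m k : ι) (s : ℝ) :
    absShift m (Pi.single k s) = Pi.single (k + m) |s| := by
  ext i
  simp only [absShift, Pi.single_apply, sub_eq_iff_eq_add, apply_ite abs, abs_zero]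

def wedge (u w : Fin 3 → ℝ) : Matrix (Fin 3) (Fin 3) ℝ := outer u w - outer w u

theorem wedge_smul_left (s : ℝ) (u w : Fin 3 → ℝ) : wedge (s • u) w = s • wedge u w := by
  ext i j
  simp [wedge, outer, mul_sub, mul_assoc, mul_left_comm]

theorem isRationalVec_single (k : Fin 3) (q : ℚ) : IsRationalVec (Pi.single k (q : ℝ)) :=
  fun i => ⟨(Pi.single k q : Fin 3 → ℚ) i,
    (Pi.apply_single (fun _ => ((↑) : ℚ → ℝ)) (fun _ => Rat.cast_zero) k q i).symm⟩

theorem orthonormalTriple_single {k : Fin 3} {s : ℝ} (hs : |s| = 1) :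
    OrthonormalTriple (Pi.single k s) (Pi.single (k + 2) 1) (Pi.single (k + 1) 1) := by
  have hss : s * s = 1 := by rw [← abs_mul_abs_self, hs, one_mul]
  fin_cases k <;> simp [OrthonormalTriple, dot3, Pi.single_apply, hss]

theorem skew_eq_sum_wedge {A : Matrix (Fin 3) (Fin 3) ℝ} (hA : Aᵀ = -A) :
    A = ∑ k : Fin 3, A k (k + 1) • wedge (Pi.single k 1) (Pi.single (k + 1) 1) := by
  have h := fun i j => congrFun (congrFun hA i) j
  simp only [Matrix.transpose_apply, Matrix.neg_apply] at h
  ext i j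
  fin_cases i <;> fin_cases j <;>
    simp [Fin.sum_univ_three, wedge, outer] <;> linarith [h 0 0, h 1 1, h 2 2, h 0 1, h 1 2, h 2 0]

def dotMulVecLinear (ξ η : Fin 3 → ℝ) : Matrix (Fin 3) (Fin 3) ℝ →ₗ[ℝ] ℝ where
  toFun A := ξ ⬝ᵥ (A *ᵥ η)
  map_add' A B := by simp [Matrix.add_mulVec, dotProduct_add]
  map_smul' c A := by simp [Matrix.smul_mulVec, dotProduct_smul]

theorem dotMulVecLinear_single (k l : Fin 3) (s : ℝ) (A : Matrix (Fin 3) (Fin 3) ℝ) :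
    dotMulVecLinear (Pi.single k s) (Pi.single l 1) A = s * A k l := by
  simp [dotMulVecLinear]

theorem Pi.eq_and_eq_of_single_eq_single {ι R : Type*} [DecidableEq ι] [Zero R] {k l : ι}
    {s t : R} (hs : s ≠ 0) (h : (Pi.single k s : ι → R) = Pi.single l t) : k = l ∧ s = t := by
  have hk := congrFun h k
  by_cases hkl : k = l
  · subst hkl
    simpa using hk
  · simp [Ne.symm hkl] at hk
    exact absurd hk hs

noncomputable def signedAxes : Finset (Fin 3 → ℝ) :=
  (Finset.univ ×ˢ {1, -1}).image fun p : Fin 3 × ℝ => (Pi.single p.1 p.2 : Fin 3 → ℝ)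

theorem mem_signedAxes {ξ : Fin 3 → ℝ} :
    ξ ∈ signedAxes ↔ ∃ k : Fin 3, ∃ s : ℝ, (s = 1 ∨ s = -1) ∧ Pi.single k s = ξ := by
  simp [signedAxes]

theorem sum_signedAxes {M : Type*} [AddCommMonoid M] (f : (Fin 3 → ℝ) → M) :
    ∑ ξ ∈ signedAxes, f ξ = ∑ k : Fin 3, (f (Pi.single k 1) + f (Pi.single k (-1))) := by
  have hinj : Set.InjOn (fun p : Fin 3 × ℝ => (Pi.single p.1 p.2 : Fin 3 → ℝ))
      (Finset.univ ×ˢ ({1, -1} : Finset ℝ) : Finset (Fin 3 × ℝ)) := by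
    rintro ⟨k, s⟩ hs ⟨l, t⟩ - h
    have hs0 : s ≠ 0 := by aesop
    obtain ⟨rfl, rfl⟩ := Pi.eq_and_eq_of_single_eq_single hs0 h
    rfl
  rw [signedAxes, Finset.sum_image hinj, Finset.sum_product]
  simp [Finset.sum_pair (by norm_num : (1 : ℝ) ≠ -1)]

theorem dotMulVecLinear_single_absShift (k : Fin 3) {s : ℝ} (hs : |s| = 1)
    (A : Matrix (Fin 3) (Fin 3) ℝ) :
    dotMulVecLinear (Pi.single k s) (absShift 1 (Pi.single k s)) A = s * A k (k + 1) := by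
  rw [absShift_single, hs, dotMulVecLinear_single]

theorem one_add_half_dotMulVecLinear_pos (k : Fin 3) {s : ℝ} (hs : |s| = 1)
    {A : Matrix (Fin 3) (Fin 3) ℝ} (hA : ‖A‖ < 1) :
    0 < 1 + dotMulVecLinear (Pi.single k s) (absShift 1 (Pi.single k s)) A / 2 := by
  have hentry : |s * A k (k + 1)| < 1 := by
    rw [abs_mul, hs, one_mul]
    exact (A.norm_entry_le_frobenius_norm k (k + 1)).trans_lt hA
  rw [dotMulVecLinear_single_absShift k hs]
  linarith [neg_abs_le (s * A k (k + 1))]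

noncomputable def gammaCoeff (ξ : Fin 3 → ℝ) (A : Matrix (Fin 3) (Fin 3) ℝ) : ℝ :=
  √(1 + dotMulVecLinear ξ (absShift 1 ξ) A / 2)

theorem gammaCoeff_sq_smul_wedge (k : Fin 3) {s : ℝ} (hs : |s| = 1)
    {A : Matrix (Fin 3) (Fin 3) ℝ} (hA : ‖A‖ < 1) :
    gammaCoeff (Pi.single k s) A ^ 2 • wedge (Pi.single k s) (absShift 1 (Pi.single k s)) =
      (s + A k (k + 1) / 2) • wedge (Pi.single k 1) (Pi.single (k + 1) 1) := by
  have hss : s * s = 1 := by rw [← abs_mul_abs_self, hs, one_mul]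
  have hsingle : (Pi.single k s : Fin 3 → ℝ) = s • Pi.single k 1 := by
    rw [← Pi.single_smul, smul_eq_mul, mul_one]
  rw [gammaCoeff, Real.sq_sqrt (one_add_half_dotMulVecLinear_pos k hs hA).le,
    dotMulVecLinear_single_absShift k hs, absShift_single, hs, hsingle, wedge_smul_left, smul_smul]
  congr 1
  linear_combination (A k (k + 1) / 2) * hss

theorem first_geometric_lemma :
    ∃ (ΛΞ : Finset (Fin 3 → ℝ)) (e₁ e₂ : (Fin 3 → ℝ) → (Fin 3 → ℝ)) (εΞ : ℝ)
      (γ : (Fin 3 → ℝ) → Matrix (Fin 3) (Fin 3) ℝ → ℝ),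
      0 < εΞ ∧
      (∀ ξ ∈ ΛΞ, IsRationalVec ξ ∧ OrthonormalTriple ξ (e₁ ξ) (e₂ ξ)) ∧
      (∀ ξ ∈ ΛΞ,
        ContDiffOn ℝ (⊤ : ℕ∞) (γ ξ)
          {A : Matrix (Fin 3) (Fin 3) ℝ | Aᵀ = -A ∧ ‖A‖ < εΞ} ∧
        ∀ A : Matrix (Fin 3) (Fin 3) ℝ, Aᵀ = -A → ‖A‖ < εΞ → 0 < γ ξ A) ∧
      ∀ A : Matrix (Fin 3) (Fin 3) ℝ, Aᵀ = -A → ‖A‖ < εΞ →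
        A = ∑ ξ ∈ ΛΞ, (γ ξ A) ^ 2 • (outer ξ (e₂ ξ) - outer (e₂ ξ) ξ) := by
  refine ⟨signedAxes, absShift 2, absShift 1, 1, gammaCoeff, one_pos, ?_, ?_, ?_⟩
  · intro ξ hξ
    obtain ⟨k, s, hs, rfl⟩ := mem_signedAxes.1 hξ
    have habs : |s| = 1 := by rcases hs with rfl | rfl <;> simp
    refine ⟨?_, ?_⟩
    · rcases hs with rfl | rfl
      · simpa using isRationalVec_single k 1
      · simpa using isRationalVec_single k (-1)
    · rw [absShift_single, absShift_single, habs]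
      exact orthonormalTriple_single habs
  · intro ξ hξ
    obtain ⟨k, s, hs, rfl⟩ := mem_signedAxes.1 hξ
    have habs : |s| = 1 := by rcases hs with rfl | rfl <;> simp
    refine ⟨?_, fun A _ hA => Real.sqrt_pos.2 (one_add_half_dotMulVecLinear_pos k habs hA)⟩
    refine ContDiffOn.sqrt ?_ fun A hA => (one_add_half_dotMulVecLinear_pos k habs hA.2).ne'
    exact (contDiff_const.add
      ((LinearMap.toContinuousLinearMap _).contDiff.div_const 2)).contDiffOn
  · intro A hskew hA
    rw [sum_signedAxes]
    conv_lhs => rw [skew_eq_sum_wedge hskew]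
    refine Finset.sum_congr rfl fun k _ => ?_
    rw [← wedge, ← wedge, gammaCoeff_sq_smul_wedge k abs_one hA,
      gammaCoeff_sq_smul_wedge k (by norm_num) hA, ← add_smul]
    congr 1
    ring
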